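/- arXiv:2410.17522 — 4 statements merged into one kernel-verified Lean document; each statement's English description precedes it below -/
import Mathlib

section
/- For every positive integer n, (n+1) D_n s_n + (n+2) D_{n-1} s_{n+1} ≡ 0 (mod 3). -/
def D (n : ℕ) : ℤ :=
  ∑ k ∈ Finset.range (n + 1), (n.choose k : ℤ) * ((n + k).choose k : ℤ)
def littleSchroeder (n : ℕ) : ℤ :=
  ∑ k ∈ Finset.Icc 1 n, ((n.choose k * n.choose (k - 1) / n * 2 ^ (n - k) : ℕ) : ℤ)

/-!
Modulo 3 we have 2 ≡ -1, so after rewriting `D n = ∑ C(n,k)² 2^(n-k)` both `D n` and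
`littleSchroeder n` become sums `∑ g k (-1)^(n-k)` over an interval whose reflection
preserves `g`. When the endpoints have odd sum, the reflection pairs each term with its negative: hence
`3 ∣ D n` for odd `n` and `3 ∣ littleSchroeder n` for even `n`, and each of the two summands of
the statement has such a factor.
-/

open Finset

theorem neg_one_pow_eq_neg_neg_one_pow_of_odd_add {R : Type*} [Ring R] {i j : ℕ}
    (hij : Odd (i + j)) : (-1 : R) ^ i = -(-1) ^ j := by
  obtain ⟨m, hm⟩ := hij
  rw [← mul_neg_one ((-1 : R) ^ j), ← pow_succ, neg_one_pow_eq_pow_mod_two,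
    neg_one_pow_eq_pow_mod_two (n := j + 1)]
  congr 1
  omega

theorem sum_Icc_mul_neg_one_pow_eq_zero {R : Type*} [Ring R] {a b : ℕ} (hab : Odd (a + b))
    (g : ℕ → R) (hg : ∀ k ∈ Icc a b, g (a + b - k) = g k) :
    ∑ k ∈ Icc a b, g k * (-1) ^ (b - k) = 0 := by
  refine sum_involution (fun k _ => a + b - k) (fun k hk => ?_) (fun k _ _ => ?_)
    (fun k hk => ?_) (fun k hk => ?_)
  · have hsign : (-1 : R) ^ (b - (a + b - k)) = -(-1) ^ (b - k) := by
      obtain ⟨m, hm⟩ := hab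
      rw [mem_Icc] at hk
      exact neg_one_pow_eq_neg_neg_one_pow_of_odd_add ⟨m - a, by omega⟩
    rw [hg k hk, hsign, mul_neg, add_neg_cancel]
  · obtain ⟨m, hm⟩ := hab
    omega
  · rw [mem_Icc] at hk ⊢
    omega
  · rw [mem_Icc] at hk
    omega

theorem Nat.sum_range_choose_mul_choose (n i : ℕ) (hi : i ≤ n) :
    ∑ k ∈ range (n + 1), n.choose k * k.choose i = n.choose i * 2 ^ (n - i) := by
  rw [range_eq_Ico, ← sum_Ico_consecutive _ (Nat.zero_le i) (by omega : i ≤ n + 1),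
    sum_eq_zero (fun k hk => by rw [Nat.choose_eq_zero_of_lt (mem_Ico.mp hk).2, mul_zero]),
    zero_add, sum_Ico_eq_sum_range]
  simp only [Nat.choose_mul (Nat.le_add_right i _), Nat.add_sub_cancel_left, ← mul_sum]
  rw [show n + 1 - i = n - i + 1 by omega, Nat.sum_range_choose]

theorem Nat.add_choose_eq_sum_choose_mul_choose (n k : ℕ) :
    (n + k).choose k = ∑ i ∈ range (n + 1), n.choose i * k.choose i := by
  rw [← Nat.choose_symm_add, Nat.add_choose_eq, ← Nat.sum_antidiagonal_swap,
    Nat.sum_antidiagonal_eq_sum_range_succ_mk]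
  refine sum_congr rfl fun i hi => ?_
  rw [Prod.swap_prod_mk, Nat.choose_symm (mem_range_succ_iff.mp hi)]

theorem Nat.sum_range_choose_mul_add_choose (n : ℕ) :
    ∑ k ∈ range (n + 1), n.choose k * (n + k).choose k
      = ∑ i ∈ range (n + 1), n.choose i ^ 2 * 2 ^ (n - i) := by
  simp only [Nat.add_choose_eq_sum_choose_mul_choose, mul_sum]
  rw [sum_comm]
  refine sum_congr rfl fun i hi => ?_
  simp only [mul_left_comm (n.choose _) (n.choose i), ← mul_sum, mul_assoc,
    Nat.sum_range_choose_mul_choose n i (mem_range_succ_iff.mp hi), sq]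

theorem D_eq_sum_choose_sq_mul_two_pow (n : ℕ) :
    D n = ∑ k ∈ Icc 0 n, (n.choose k : ℤ) ^ 2 * 2 ^ (n - k) := by
  rw [D, ← Nat.range_succ_eq_Icc_zero]
  exact_mod_cast Nat.sum_range_choose_mul_add_choose n

theorem D_cast_zmod_three_of_odd {n : ℕ} (hn : Odd n) : (D n : ZMod 3) = 0 := by
  rw [D_eq_sum_choose_sq_mul_two_pow]
  push_cast
  rw [show (2 : ZMod 3) = -1 by decide]
  exact sum_Icc_mul_neg_one_pow_eq_zero (by simpa using hn) _
    fun k hk => by rw [zero_add, Nat.choose_symm (mem_Icc.mp hk).2]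

theorem littleSchroeder_cast_zmod_three_of_even {n : ℕ} (hn : Even n) :
    (littleSchroeder n : ZMod 3) = 0 := by
  simp only [littleSchroeder, Int.cast_sum, Int.cast_natCast]
  simp only [Nat.cast_mul, Nat.cast_pow, Nat.cast_ofNat]
  rw [show (2 : ZMod 3) = -1 by decide]
  refine sum_Icc_mul_neg_one_pow_eq_zero (by rw [add_comm]; exact hn.add_one) _ fun k hk => ?_
  obtain ⟨hk1, hkn⟩ := mem_Icc.mp hk
  rw [show 1 + n - k - 1 = n - k by omega, Nat.choose_symm hkn,
    show 1 + n - k = n - (k - 1) by omega, Nat.choose_symm (by omega), mul_comm (n.choose (k - 1))]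

theorem stmt2 (n : ℕ) (hn : 0 < n) :
    ((n : ℤ) + 1) * D n * littleSchroeder n + ((n : ℤ) + 2) * D (n - 1) * littleSchroeder (n + 1)
      ≡ 0 [ZMOD 3] := by
  refine (ZMod.intCast_eq_intCast_iff _ _ 3).mp ?_
  push_cast
  rcases Nat.even_or_odd n with hn_even | hn_odd
  · have hpred : Odd (n - 1) := Nat.Even.sub_odd hn hn_even odd_one
    rw [littleSchroeder_cast_zmod_three_of_even hn_even, D_cast_zmod_three_of_odd hpred]
    ring
  · rw [D_cast_zmod_three_of_odd hn_odd, littleSchroeder_cast_zmod_three_of_even hn_odd.add_one]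
    ring
end

section
/- For every positive integer n, ∑_{k=1}^n (−1)^{n−k} k^2 D_k D_{k−1} = (n+1) · (3(n+1) D_n^2 + (8+18n) D_{n+1} D_n − 3(n+1) D_{n+1}^2)/36. -/
open Finset

namespace Delannoy

lemma succ_sub_mul_choose_succ (m k : ℕ) :
    ((m : ℤ) + 1 - k) * ((m + 1).choose k : ℤ) = ((m : ℤ) + 1) * (m.choose k : ℤ) := by
  rcases le_or_gt k (m + 1) with h | h
  · have := congrArg (Nat.cast : ℕ → ℤ) (Nat.choose_mul_succ_eq m k)
    push_cast [Nat.cast_sub h] at this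
    linear_combination -this
  · rw [Nat.choose_eq_zero_of_lt h, Nat.choose_eq_zero_of_lt (by omega)]
    ring

lemma succ_mul_choose_succ (m k : ℕ) :
    ((k : ℤ) + 1) * (m.choose (k + 1) : ℤ) = ((m : ℤ) - k) * (m.choose k : ℤ) := by
  rcases le_or_gt k m with h | h
  · have := congrArg (Nat.cast : ℕ → ℤ) (Nat.choose_succ_right_eq m k)
    push_cast [Nat.cast_sub h] at this
    linear_combination this
  · rw [Nat.choose_eq_zero_of_lt h, Nat.choose_eq_zero_of_lt (by omega)]
    ring

lemma succ_mul_choose_add_succ (m k : ℕ) :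
    ((m : ℤ) + 1) * ((m + 1 + k).choose k : ℤ)
      = ((m : ℤ) + k + 1) * ((m + k).choose k : ℤ) := by
  have := succ_sub_mul_choose_succ (m + k) k
  rw [show m + k + 1 = m + 1 + k by omega] at this
  push_cast at this
  linear_combination this

def summand (n k : ℕ) : ℤ := (n.choose k : ℤ) * ((n + k).choose k : ℤ)

lemma D_eq_sum_summand (n N : ℕ) (h : n + 1 ≤ N) : D n = ∑ k ∈ range N, summand n k :=
  sum_subset (range_subset_range.mpr h) fun k _ hk => by
    simp [Nat.choose_eq_zero_of_lt (by simpa using hk : n < k)]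

/-- Every term of the telescoping identity is a polynomial multiple of this one. -/
def base (n k : ℕ) : ℤ := ((n + 2).choose k : ℤ) * ((n + k).choose k : ℤ)

def certificate (n k : ℕ) : ℤ := 2 * (k : ℤ) ^ 2 * (2 * n + 3) * base n k

section Telescoping

variable (n k : ℕ)

lemma summand_mul_eq :
    ((n : ℤ) + 1) * (n + 2) * summand n k = ((n : ℤ) + 1 - k) * (n + 2 - k) * base n k := by
  have h1 := succ_sub_mul_choose_succ n k
  have h2 := succ_sub_mul_choose_succ (n + 1) k
  push_cast at h2
  unfold summand base
  linear_combination (-((n : ℤ) + 1 - k) * ((n + k).choose k : ℤ)) * h2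
    - ((n : ℤ) + 2) * ((n + k).choose k : ℤ) * h1

lemma summand_succ_mul_eq :
    ((n : ℤ) + 1) * (n + 2) * summand (n + 1) k
      = ((n : ℤ) + 2 - k) * (n + k + 1) * base n k := by
  have h2 := succ_sub_mul_choose_succ (n + 1) k
  have h3 := succ_mul_choose_add_succ n k
  push_cast at h2
  unfold summand base
  linear_combination ((n : ℤ) + 2) * ((n + 1).choose k : ℤ) * h3
    - ((n : ℤ) + k + 1) * ((n + k).choose k : ℤ) * h2

lemma summand_succ_succ_mul_eq :
    ((n : ℤ) + 1) * (n + 2) * summand (n + 2) k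
      = ((n : ℤ) + k + 1) * (n + k + 2) * base n k := by
  have h3 := succ_mul_choose_add_succ n k
  have h4 := succ_mul_choose_add_succ (n + 1) k
  rw [show n + 1 + 1 + k = n + 2 + k by omega] at h4
  push_cast at h3 h4
  unfold summand base
  linear_combination ((n : ℤ) + 1) * ((n + 2).choose k : ℤ) * h4
    + ((n : ℤ) + k + 2) * ((n + 2).choose k : ℤ) * h3

lemma certificate_succ :
    certificate n (k + 1) = 2 * (2 * (n : ℤ) + 3) * (n + 2 - k) * (n + k + 1) * base n k := by
  have h3 := succ_mul_choose_add_succ n k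
  have h5 := succ_mul_choose_succ (n + 2) k
  have h6 := succ_mul_choose_succ (n + 1 + k) k
  push_cast at h5 h6
  unfold certificate base
  rw [show n + (k + 1) = n + 1 + k by omega]
  push_cast
  linear_combination 2 * (2 * (n : ℤ) + 3) *
    (((k : ℤ) + 1) * ((n + 1 + k).choose (k + 1) : ℤ) * h5
    + ((n : ℤ) + 2 - k) * ((n + 2).choose k : ℤ) * h6
    + ((n : ℤ) + 2 - k) * ((n + 2).choose k : ℤ) * h3)

lemma recurrence_summand_eq_certificate_sub :
    ((n : ℤ) + 1) * (n + 2) *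
        ((n + 1) * summand n k - 3 * (2 * n + 3) * summand (n + 1) k
          + (n + 2) * summand (n + 2) k)
      = certificate n k - certificate n (k + 1) := by
  rw [certificate_succ]
  unfold certificate
  linear_combination ((n : ℤ) + 1) * summand_mul_eq n k
    - 3 * (2 * (n : ℤ) + 3) * summand_succ_mul_eq n k
    + ((n : ℤ) + 2) * summand_succ_succ_mul_eq n k

end Telescoping

theorem D_recurrence (n : ℕ) :
    ((n : ℤ) + 2) * D (n + 2) = 3 * (2 * n + 3) * D (n + 1) - (n + 1) * D n := by
  have htelescope : ((n : ℤ) + 1) * (n + 2) *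
      ((n + 1) * D n - 3 * (2 * n + 3) * D (n + 1) + (n + 2) * D (n + 2)) = 0 := by
    rw [D_eq_sum_summand n (n + 3) (by omega), D_eq_sum_summand (n + 1) (n + 3) (by omega),
      D_eq_sum_summand (n + 2) (n + 3) (by omega), mul_sum, mul_sum, mul_sum,
      ← sum_sub_distrib, ← sum_add_distrib, mul_sum]
    simp only [recurrence_summand_eq_certificate_sub]
    rw [sum_range_sub']
    simp [certificate, base]
  have := (mul_eq_zero.mp htelescope).resolve_left (by positivity)
  linarith

end Delannoy

theorem sum_Icc_succ_alternating {R : Type*} [CommRing R] (f : ℕ → R) (n : ℕ) :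
    ∑ k ∈ Icc 1 (n + 1), (-1 : R) ^ (n + 1 - k) * f k
      = f (n + 1) - ∑ k ∈ Icc 1 n, (-1 : R) ^ (n - k) * f k := by
  rw [sum_Icc_succ_top (by omega), Nat.sub_self, pow_zero, one_mul, sub_eq_neg_add,
    ← sum_neg_distrib]
  congr 1
  refine sum_congr rfl fun k hk => ?_
  rw [show n + 1 - k = n - k + 1 by have := (mem_Icc.mp hk).2; omega, pow_succ]
  ring

theorem stmt3_general (n : ℕ) :
    36 * ∑ k ∈ Finset.Icc 1 n, (-1 : ℤ) ^ (n - k) * k ^ 2 * D k * D (k - 1)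
      = ((n : ℤ) + 1) * (3 * ((n : ℤ) + 1) * D n ^ 2 + (8 + 18 * n) * D (n + 1) * D n
          - 3 * ((n : ℤ) + 1) * D (n + 1) ^ 2) := by
  induction n with
  | zero => norm_num [D, sum_range_succ]
  | succ n ih =>
    have hstep := sum_Icc_succ_alternating (fun k => (k : ℤ) ^ 2 * D k * D (k - 1)) n
    simp only [← mul_assoc, Nat.add_sub_cancel] at hstep
    rw [hstep]
    apply mul_left_cancel₀ (by positivity : ((n : ℤ) + 2) ^ 2 ≠ 0)
    push_cast
    linear_combination -((n : ℤ) + 2) ^ 2 * ih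
      + (3 * ((n : ℤ) + 2) ^ 3 * D (n + 2) + ((n : ℤ) + 2) ^ 2 * D (n + 1)
          - 3 * ((n : ℤ) + 1) * ((n : ℤ) + 2) ^ 2 * D n) * Delannoy.D_recurrence n

theorem stmt3 (n : ℕ) (hn : 0 < n) :
    36 * ∑ k ∈ Finset.Icc 1 n, (-1 : ℤ) ^ (n - k) * k ^ 2 * D k * D (k - 1)
      = ((n : ℤ) + 1) * (3 * ((n : ℤ) + 1) * D n ^ 2 + (8 + 18 * n) * D (n + 1) * D n
          - 3 * ((n : ℤ) + 1) * D (n + 1) ^ 2) :=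
  stmt3_general n
end

section
/- For every positive integer n, ∑_{k=1}^n (−1)^{n−k} (4k^2+2k−1) D_{k−1} s_k = n · ((n+1) D_n s_n + (n+2) D_{n−1} s_{n+1})/3. -/
/-!
Both sequences satisfy three-term recurrences,
  `(n+2) D(n+2) = 3(2n+3) D(n+1) - (n+1) D(n)` and `(n+3) s(n+2) = 3(2n+3) s(n+1) - n s(n)`,
proved by creative telescoping: a fixed combination of the summands at `n`, `n+1`, `n+2` is a
difference `G k - G (k+1)` of a (Zeilberger) certificate `G` vanishing at both ends of the
range.
For `s` one telescopes `n s(n) = ∑ C(n,i) C(n,i+1) 2^i`, which is free of the division. Each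
certificate identity reduces to a rational-function identity once every binomial coefficient is
written as a rational multiple of a single one.

By the two recurrences, the right-hand side `R n` satisfies
`R (n+1) + R n = 3 (4(n+1)^2 + 2(n+1) - 1) D(n) s(n+1)`, as the alternating sum does, and both
vanish at `n = 0`.
-/

open Finset

namespace Nat

variable {K : Type*} [Field K] [CharZero K]

theorem cast_choose_eq_mul_cast_choose_succ (n k : ℕ) :
    (n.choose k : K) = (n + 1 - k) / (n + 1) * ((n + 1).choose k : K) := by
  rcases le_or_gt k (n + 1) with hk | hk
  · have h := congrArg (Nat.cast : ℕ → K) (choose_mul_succ_eq n k)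
    push_cast [Nat.cast_sub hk] at h
    field_simp
    linear_combination h
  · simp [choose_eq_zero_of_lt hk, choose_eq_zero_of_lt (by omega : n < k)]

theorem cast_choose_succ_right_eq_mul (n k : ℕ) :
    (n.choose (k + 1) : K) = (n - k) / (k + 1) * (n.choose k : K) := by
  rcases le_or_gt k n with hk | hk
  · have h := congrArg (Nat.cast : ℕ → K) (choose_succ_right_eq n k)
    push_cast [Nat.cast_sub hk] at h
    field_simp
    linear_combination h
  · simp [choose_eq_zero_of_lt hk, choose_eq_zero_of_lt (by omega : n < k + 1)]

theorem cast_choose_succ_succ_eq_mul (n k : ℕ) :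
    ((n + 1).choose (k + 1) : K) = (n + 1) / (k + 1) * (n.choose k : K) := by
  have h := congrArg (Nat.cast : ℕ → K) (add_one_mul_choose_eq n k)
  push_cast at h
  field_simp
  linear_combination -h

theorem cast_add_succ_choose_eq_mul (m k : ℕ) :
    ((m + 1 + k).choose k : K) = (m + 1 + k) / (m + 1) * ((m + k).choose k : K) := by
  have h := congrArg (Nat.cast : ℕ → K) (choose_mul_succ_eq (m + k) k)
  rw [show m + k + 1 - k = m + 1 by omega, add_right_comm m k 1] at h
  push_cast at h
  field_simp
  linear_combination -h

theorem succ_dvd_choose_succ_mul_choose (n k : ℕ) :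
    n + 1 ∣ (n + 1).choose (k + 1) * (n + 1).choose k := by
  have h : ((n + 1).choose (k + 1) : ℚ) * (n + 1).choose k
      = (n + 1) * ((n + 1).choose (k + 1) * n.choose k - (n + 1).choose k * n.choose (k + 1)) := by
    rw [cast_choose_eq_mul_cast_choose_succ n k, cast_choose_eq_mul_cast_choose_succ n (k + 1),
      cast_choose_succ_right_eq_mul (n + 1) k]
    push_cast
    field_simp
    ring
  exact Int.natCast_dvd_natCast.mp ⟨_, by exact_mod_cast h⟩

end Nat

open Nat

theorem Finset.sum_range_eq_sum_range_of_le {M : Type*} [AddCommMonoid M] {f : ℕ → M}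
    {m N : ℕ} (hmN : m ≤ N) (hf : ∀ k, m ≤ k → f k = 0) :
    ∑ k ∈ range N, f k = ∑ k ∈ range m, f k :=
  (sum_subset (range_subset_range.2 hmN) fun k _ hk => hf k (by simpa using hk)).symm

theorem cast_D_eq_sum_range {n N : ℕ} (hN : n < N) :
    (D n : ℚ) = ∑ k ∈ range N, (n.choose k : ℚ) * (n + k).choose k := by
  rw [sum_range_eq_sum_range_of_le hN fun k hk => by simp [choose_eq_zero_of_lt hk], D]
  push_cast
  rfl

def delannoyCertificate (n k : ℕ) : ℚ :=
  2 * (2 * n + 3) * k ^ 2 / ((n + 1) * (n + 2)) * (n + 2).choose k * (n + k).choose k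

theorem delannoy_summand_telescopes (n k : ℕ) :
    ((n : ℚ) + 2) * ((n + 2).choose k * (n + 2 + k).choose k)
      - 3 * (2 * n + 3) * ((n + 1).choose k * (n + 1 + k).choose k)
      + (n + 1) * (n.choose k * (n + k).choose k)
      = delannoyCertificate n k - delannoyCertificate n (k + 1) := by
  rw [delannoyCertificate, delannoyCertificate, show n + 2 = n + 1 + 1 from rfl,
    ← add_assoc n k 1, cast_choose_succ_succ_eq_mul (n + k), cast_choose_succ_right_eq_mul,
    cast_add_succ_choose_eq_mul (n + 1), cast_add_succ_choose_eq_mul n,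
    cast_choose_eq_mul_cast_choose_succ n k, cast_choose_eq_mul_cast_choose_succ (n + 1) k]
  push_cast
  field_simp
  ring

theorem D_add_two (n : ℕ) :
    ((n : ℤ) + 2) * D (n + 2) = 3 * (2 * n + 3) * D (n + 1) - (n + 1) * D n := by
  have key := sum_range_sub' (delannoyCertificate n) (n + 3)
  rw [← sum_congr rfl fun k _ => delannoy_summand_telescopes n k, sum_add_distrib,
    sum_sub_distrib, ← mul_sum, ← mul_sum, ← mul_sum, ← cast_D_eq_sum_range (by omega),
    ← cast_D_eq_sum_range (by omega), ← cast_D_eq_sum_range (by omega),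
    show delannoyCertificate n 0 = 0 by simp [delannoyCertificate],
    show delannoyCertificate n (n + 3) = 0 by simp [delannoyCertificate]] at key
  have h : ((n : ℚ) + 2) * D (n + 2) = 3 * (2 * n + 3) * D (n + 1) - (n + 1) * D n := by
    linear_combination key
  exact_mod_cast h

theorem natCast_mul_littleSchroeder (n : ℕ) :
    (n : ℤ) * littleSchroeder n
      = ∑ i ∈ range n, (n.choose i : ℤ) * n.choose (i + 1) * 2 ^ i := by
  rw [littleSchroeder, mul_sum]
  refine sum_nbij' (n - ·) (n - ·) ?_ ?_ ?_ ?_ fun k hk => ?_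
  iterate 4 intro a ha; simp only [mem_Icc, mem_range] at ha ⊢; omega
  obtain ⟨m, rfl⟩ : ∃ m, n = m + 1 := ⟨n - 1, by simp only [mem_Icc] at hk; omega⟩
  obtain ⟨j, rfl⟩ : ∃ j, k = j + 1 := ⟨k - 1, by simp only [mem_Icc] at hk; omega⟩
  simp only [mem_Icc] at hk
  rw [choose_symm_of_eq_add (show m + 1 = m + 1 - (j + 1) + (j + 1) by omega),
    choose_symm_of_eq_add (show m + 1 = m + 1 - (j + 1) + 1 + j by omega), add_tsub_cancel_right,
    show m + 1 - (j + 1) = m - j by omega]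
  push_cast [← mul_assoc]
  rw [Int.mul_ediv_cancel' (by exact_mod_cast succ_dvd_choose_succ_mul_choose m j)]

theorem natCast_mul_littleSchroeder_eq_sum_range {n N : ℕ} (hN : n ≤ N) :
    (n : ℚ) * littleSchroeder n
      = ∑ i ∈ range N, (n.choose i : ℚ) * n.choose (i + 1) * 2 ^ i := by
  rw [sum_range_eq_sum_range_of_le hN fun i hi => by
    simp [choose_eq_zero_of_lt (lt_succ_of_le hi)]]
  exact_mod_cast natCast_mul_littleSchroeder n

def littleSchroederCertificate (n i : ℕ) : ℚ :=
  ((n + 1) * (2 * n + 3) + i - i ^ 2) / ((n + 1) * (n + 2)) * (i * (i + 1))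
    * ((n + 2).choose i * (n + 2).choose (i + 1) * 2 ^ i)

theorem littleSchroeder_summand_telescopes (n i : ℕ) :
    ((n : ℚ) + 1) * (n + 3) * ((n + 2).choose i * (n + 2).choose (i + 1) * 2 ^ i)
      - 3 * (2 * n + 3) * (n + 2) * ((n + 1).choose i * (n + 1).choose (i + 1) * 2 ^ i)
      + (n + 1) * (n + 2) * (n.choose i * n.choose (i + 1) * 2 ^ i)
      = littleSchroederCertificate n i - littleSchroederCertificate n (i + 1) := by
  rw [littleSchroederCertificate, littleSchroederCertificate, show n + 2 = n + 1 + 1 from rfl,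
    cast_choose_eq_mul_cast_choose_succ n i, cast_choose_eq_mul_cast_choose_succ n (i + 1),
    cast_choose_eq_mul_cast_choose_succ (n + 1) i,
    cast_choose_eq_mul_cast_choose_succ (n + 1) (i + 1),
    cast_choose_succ_right_eq_mul (n + 1 + 1) (i + 1), cast_choose_succ_right_eq_mul (n + 1 + 1) i]
  push_cast
  field_simp
  ring

theorem littleSchroeder_add_two (n : ℕ) :
    ((n : ℤ) + 3) * littleSchroeder (n + 2)
      = 3 * (2 * n + 3) * littleSchroeder (n + 1) - n * littleSchroeder n := by
  have key := sum_range_sub' (littleSchroederCertificate n) (n + 3)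
  rw [← sum_congr rfl fun i _ => littleSchroeder_summand_telescopes n i, sum_add_distrib,
    sum_sub_distrib, ← mul_sum, ← mul_sum, ← mul_sum,
    ← natCast_mul_littleSchroeder_eq_sum_range (by omega),
    ← natCast_mul_littleSchroeder_eq_sum_range (by omega),
    ← natCast_mul_littleSchroeder_eq_sum_range (by omega),
    show littleSchroederCertificate n 0 = 0 by simp [littleSchroederCertificate],
    show littleSchroederCertificate n (n + 3) = 0 by simp [littleSchroederCertificate]] at key
  push_cast at key
  have h : ((n : ℚ) + 3) * littleSchroeder (n + 2)
      = 3 * (2 * n + 3) * littleSchroeder (n + 1) - n * littleSchroeder n := by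
    refine mul_left_cancel₀ (by positivity : ((n : ℚ) + 1) * (n + 2) ≠ 0) ?_
    linear_combination key
  exact_mod_cast h

theorem stmt6_general (n : ℕ) :
    3 * ∑ k ∈ Finset.Icc 1 n, (-1 : ℤ) ^ (n - k) * (4 * k ^ 2 + 2 * k - 1) * D (k - 1) * littleSchroeder k
      = n * (((n : ℤ) + 1) * D n * littleSchroeder n + ((n : ℤ) + 2) * D (n - 1) * littleSchroeder (n + 1)) := by
  induction n with
  | zero => simp
  | succ n ih =>
    have hsign : ∑ k ∈ Icc 1 n,
          (-1 : ℤ) ^ (n + 1 - k) * (4 * k ^ 2 + 2 * k - 1) * D (k - 1) * littleSchroeder k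
        = -∑ k ∈ Icc 1 n,
          (-1 : ℤ) ^ (n - k) * (4 * k ^ 2 + 2 * k - 1) * D (k - 1) * littleSchroeder k := by
      rw [← sum_neg_distrib]
      refine sum_congr rfl fun k hk => ?_
      rw [show n + 1 - k = n - k + 1 by simp only [mem_Icc] at hk; omega, pow_succ]
      ring
    rw [sum_Icc_succ_top (by omega), hsign, Nat.sub_self, add_tsub_cancel_right]
    rcases n with _ | m
    · simp [show D 0 = 1 from rfl, show D 1 = 3 from rfl, show littleSchroeder 1 = 1 from rfl,
        show littleSchroeder 2 = 3 from rfl]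
    · have hD := D_add_two m
      have hs := littleSchroeder_add_two (m + 1)
      push_cast at ih hs ⊢
      linear_combination -ih - ((m : ℤ) + 3) * littleSchroeder (m + 2) * hD
        - ((m : ℤ) + 2) * D (m + 1) * hs

theorem stmt6 (n : ℕ) (hn : 0 < n) :
    3 * ∑ k ∈ Finset.Icc 1 n, (-1 : ℤ) ^ (n - k) * (4 * k ^ 2 + 2 * k - 1) * D (k - 1) * littleSchroeder k
      = n * (((n : ℤ) + 1) * D n * littleSchroeder n + ((n : ℤ) + 2) * D (n - 1) * littleSchroeder (n + 1)) :=
  stmt6_general n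
end

section
/- For any prime p > 3, ∑_{k=1}^{p−1} (−1)^k k^2 D_k D_{k−1} ≡ −(5/6) p (mod p^2), i.e., 6 ∑_{k=1}^{p−1} (−1)^k k^2 D_k D_{k−1} ≡ −5p (mod p^2). -/
/-!
The central Delannoy numbers satisfy `(m + 1) D (m + 1) = 3 (2m + 1) D m - m D (m - 1)` (a WZ pair
proves it), and with it one checks by induction the closed form
`36 ∑_{k=1}^{m} (-1)^k k² D_k D_{k-1} = (-1)^m (3m²(D_m² - D_{m-1}²) + 2m(9m + 5) D_m D_{m-1})`.
Take `m = p - 1`, which is even. Modulo `p` one has `D (p - 1) ≡ 1` and `D p ≡ 3` (the middle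
binomials are divisible by `p`, and `C(2p, p) ≡ 2`); through the recurrence at `m = p - 1` these
give `D (p - 2) ≡ 3 D (p - 1) (mod p²)`, and substituting this into the closed form leaves
`30 p (p - 1) D (p - 1)² ≡ -30 p (mod p²)`.
-/

open Finset Polynomial
open scoped Nat

def delannoyTerm (n k : ℕ) : ℤ := n.choose k * (n + k).choose k

lemma D_eq_sum_range {n N : ℕ} (h : n + 1 ≤ N) : D n = ∑ k ∈ range N, delannoyTerm n k := by
  refine sum_subset (range_subset_range.mpr h) fun k _ hk => ?_
  rw [mem_range, not_lt] at hk
  simp [Nat.choose_eq_zero_of_lt (show n < k by omega)]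

lemma descPochhammer_eval_add_one {R : Type*} [CommRing R] (m : ℕ) (x : R) :
    (descPochhammer R (m + 1)).eval (x + 1) = (x + 1) * (descPochhammer R m).eval x := by
  simp [descPochhammer_succ_left]

-- Scaled by `k!²`, the summand becomes a polynomial in `n`, vanishing by itself when `n < k`.
lemma factorial_sq_mul_delannoyTerm (n k : ℕ) :
    (k ! : ℤ) ^ 2 * delannoyTerm n k = (descPochhammer ℤ (2 * k)).eval ((n + k : ℕ) : ℤ) := by
  rw [descPochhammer_eval_eq_descFactorial,
    ← Nat.descFactorial_mul_descFactorial (k := k) (by omega), show n + k - k = n by omega,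
    show 2 * k - k = k by omega, Nat.descFactorial_eq_factorial_mul_choose,
    Nat.descFactorial_eq_factorial_mul_choose, delannoyTerm]
  push_cast
  ring

-- The WZ certificate of the recurrence of `D`, as produced by Zeilberger's algorithm.
def delannoyCert (n : ℕ) : ℕ → ℤ
  | 0 => 0
  | k + 1 => 2 * (2 * n + 3) * delannoyTerm (n + 1) k

lemma delannoyTerm_wz (n k : ℕ) :
    (n + 2 : ℤ) * delannoyTerm (n + 2) k - 3 * (2 * n + 3) * delannoyTerm (n + 1) k
      + (n + 1 : ℤ) * delannoyTerm n k = delannoyCert n k - delannoyCert n (k + 1) := by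
  rcases k with _ | j
  · simp [delannoyTerm, delannoyCert]
    ring
  have hT : ∀ m : ℕ, ((j + 1)! : ℤ) ^ 2 * delannoyTerm m (j + 1)
      = (descPochhammer ℤ (2 * j + 1 + 1)).eval ((m + j + 1 : ℕ) : ℤ) := by
    intro m; rw [factorial_sq_mul_delannoyTerm]; rfl
  have h0 := hT n
  have h1 := hT (n + 1)
  have h2 := hT (n + 2)
  have hc := factorial_sq_mul_delannoyTerm (n + 1) j
  have hfac : ((j + 1)! : ℤ) = (j + 1) * j ! := by push_cast [Nat.factorial_succ]; ring
  -- after scaling by `(j + 1)!²` every term is a multiple of `(descPochhammer ℤ (2 * j)).eval x`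
  set x : ℤ := n + j + 1
  push_cast at h0 h1 h2 hc
  rw [show (n : ℤ) + j + 1 = x by ring, descPochhammer_succ_eval, descPochhammer_succ_eval] at h0
  rw [show (n : ℤ) + 1 + j + 1 = x + 1 by ring, descPochhammer_eval_add_one,
    descPochhammer_succ_eval] at h1
  rw [show (n : ℤ) + 2 + j + 1 = x + 1 + 1 by ring, descPochhammer_eval_add_one,
    descPochhammer_eval_add_one] at h2
  rw [show (n : ℤ) + 1 + j = x by ring] at hc
  push_cast at h0 h1
  apply mul_left_cancel₀ (pow_ne_zero 2 (Nat.cast_ne_zero.mpr (j + 1).factorial_ne_zero))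
  simp only [delannoyCert]
  linear_combination (n + 2 : ℤ) * h2 - (2 * n + 3 : ℤ) * h1 + (n + 1 : ℤ) * h0
    - 2 * (2 * n + 3 : ℤ) * ((((j + 1)! : ℤ) + (j + 1) * j !) * delannoyTerm (n + 1) j * hfac
      + (j + 1) ^ 2 * hc)

lemma D_recurrence (m : ℕ) :
    (m + 1 : ℤ) * D (m + 1) = 3 * (2 * m + 1) * D m - m * D (m - 1) := by
  rcases m with _ | n
  · simp [D, sum_range_succ]
  have htel : ∑ k ∈ range (n + 3), ((n + 2 : ℤ) * delannoyTerm (n + 2) k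
      - 3 * (2 * n + 3) * delannoyTerm (n + 1) k + (n + 1 : ℤ) * delannoyTerm n k) = 0 := by
    rw [sum_congr rfl fun k _ => delannoyTerm_wz n k, sum_range_sub']
    simp [delannoyCert, delannoyTerm]
  rw [sum_add_distrib, sum_sub_distrib, ← mul_sum, ← mul_sum, ← mul_sum,
    ← D_eq_sum_range le_rfl, ← D_eq_sum_range (by omega), ← D_eq_sum_range (by omega)] at htel
  push_cast
  linear_combination htel

lemma alternating_sum_closed_form (m : ℕ) :
    36 * ∑ k ∈ Icc 1 m, (-1 : ℤ) ^ k * k ^ 2 * D k * D (k - 1)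
      = (-1) ^ m * (3 * m ^ 2 * (D m ^ 2 - D (m - 1) ^ 2)
        + 2 * m * (9 * m + 5) * D m * D (m - 1)) := by
  induction m with
  | zero => simp
  | succ m ih =>
    rw [sum_Icc_succ_top (by omega), mul_add, ih, Nat.add_sub_cancel]
    push_cast
    linear_combination
      (-1 : ℤ) ^ m * (3 * ((m + 1) * D (m + 1) - m * D (m - 1)) + D m) * D_recurrence m

lemma D_pred_modEq_one {p : ℕ} (hp : p.Prime) : D (p - 1) ≡ 1 [ZMOD p] := by
  obtain ⟨q, rfl⟩ : ∃ q, p = q + 1 := ⟨p - 1, by have := hp.two_le; omega⟩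
  have hdvd : ∀ i ∈ range q, ((q + 1 : ℕ) : ℤ) ∣ delannoyTerm q (i + 1) := fun i hi =>
    Dvd.dvd.mul_left (Int.natCast_dvd_natCast.mpr
      (hp.dvd_choose (by simp at hi; omega) (by omega) (by omega))) _
  rw [Nat.add_sub_cancel, D_eq_sum_range le_rfl, sum_range_succ']
  simpa [delannoyTerm] using (Int.modEq_zero_iff_dvd.mpr (dvd_sum hdvd)).add_right 1

lemma choose_two_mul_self_modEq_two {p : ℕ} (hp : p.Prime) :
    ((2 * p).choose p : ℤ) ≡ 2 [ZMOD p] := by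
  have := Fact.mk hp
  simpa [hp.pos] using Choose.choose_modEq_choose_mod_mul_choose_div (n := 2 * p) (k := p) (p := p)

lemma D_prime_modEq_three {p : ℕ} (hp : p.Prime) : D p ≡ 3 [ZMOD p] := by
  obtain ⟨q, rfl⟩ : ∃ q, p = q + 1 := ⟨p - 1, by have := hp.two_le; omega⟩
  have hdvd : ∀ i ∈ range q, ((q + 1 : ℕ) : ℤ) ∣ delannoyTerm (q + 1) (i + 1) := fun i hi =>
    Dvd.dvd.mul_right (Int.natCast_dvd_natCast.mpr
      (hp.dvd_choose_self (by omega) (by simp at hi; omega))) _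
  rw [D_eq_sum_range le_rfl, sum_range_succ, sum_range_succ']
  have hmid := Int.modEq_zero_iff_dvd.mpr (dvd_sum hdvd)
  have hcentral := choose_two_mul_self_modEq_two hp
  rw [two_mul] at hcentral
  convert (hmid.add_right 1).add hcentral using 1
  · simp [delannoyTerm]
  · norm_num

lemma natCast_mul_eq_of_modEq {n : ℕ} {x y : ℤ} (h : x ≡ y [ZMOD n]) :
    (n : ZMod (n ^ 2)) * x = n * y := by
  obtain ⟨t, ht⟩ := Int.modEq_iff_dvd.mp h
  have hn : (n : ZMod (n ^ 2)) ^ 2 = 0 := by exact_mod_cast ZMod.natCast_self (n ^ 2)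
  have ht' := congrArg (Int.cast : ℤ → ZMod (n ^ 2)) ht
  push_cast at ht'
  linear_combination (-(n : ZMod (n ^ 2))) * ht' - (t : ZMod (n ^ 2)) * hn

lemma isUnit_six_zmod_sq {p : ℕ} (hp : p.Prime) (hp3 : 3 < p) : IsUnit (6 : ZMod (p ^ 2)) := by
  rw [show (6 : ZMod (p ^ 2)) = ((2 * 3 : ℕ) : ZMod (p ^ 2)) by norm_num, ZMod.isUnit_iff_coprime]
  refine Nat.Coprime.pow_right 2 (Nat.Coprime.mul_left ?_ ?_) <;>
    exact (Nat.coprime_primes (by norm_num) hp).mpr (by omega)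

lemma D_sub_two_eq_three_mul_D_pred {p : ℕ} (hp : p.Prime) :
    (D (p - 2) : ZMod (p ^ 2)) = 3 * D (p - 1) := by
  obtain ⟨m, rfl⟩ : ∃ m, p = m + 1 := ⟨p - 1, by have := hp.two_le; omega⟩
  have hrec := congrArg (Int.cast : ℤ → ZMod ((m + 1) ^ 2)) (D_recurrence m)
  have ha := natCast_mul_eq_of_modEq (D_pred_modEq_one hp)
  have hc := natCast_mul_eq_of_modEq (D_prime_modEq_three hp)
  have hP : ((m + 1 : ℕ) : ZMod ((m + 1) ^ 2)) ^ 2 = 0 := by exact_mod_cast ZMod.natCast_self _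
  rw [Nat.add_sub_cancel] at ha ⊢
  rw [show m + 1 - 2 = m - 1 by omega]
  push_cast at hrec ha hc hP ⊢
  -- the recurrence times `p` gives `p D (p - 2) = 3 p D (p - 1)`, the recurrence itself the rest
  have hpb : ((m : ZMod ((m + 1) ^ 2)) + 1) * D (m - 1) = 3 * (m + 1) := by
    linear_combination -(m + 1 : ZMod ((m + 1) ^ 2)) * hrec
      + ((D (m + 1) : ZMod ((m + 1) ^ 2)) - 6 * D m + D (m - 1)) * hP + 3 * ha
  linear_combination -hrec + hc - 6 * ha + hpb

theorem stmt7 (p : ℕ) (hp : p.Prime) (hp3 : 3 < p) :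
    6 * ∑ k ∈ Finset.Icc 1 (p - 1), (-1 : ℤ) ^ k * k ^ 2 * D k * D (k - 1)
      ≡ -5 * p [ZMOD (p ^ 2)] := by
  obtain ⟨m, rfl⟩ : ∃ m, p = m + 1 := ⟨p - 1, by omega⟩
  have hm : Even m := by
    simpa [Nat.odd_add_one, Nat.not_odd_iff_even] using hp.odd_of_ne_two (by omega)
  have hsum := congrArg (Int.cast : ℤ → ZMod ((m + 1) ^ 2)) (alternating_sum_closed_form m)
  have ha := natCast_mul_eq_of_modEq (D_pred_modEq_one hp)
  have hb := D_sub_two_eq_three_mul_D_pred hp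
  have hP : ((m + 1 : ℕ) : ZMod ((m + 1) ^ 2)) ^ 2 = 0 := by exact_mod_cast ZMod.natCast_self _
  rw [hm.neg_one_pow, one_mul] at hsum
  rw [Nat.add_sub_cancel] at ha hb ⊢
  rw [show m + 1 - 2 = m - 1 by omega] at hb
  rw [← Nat.cast_pow, ← ZMod.intCast_eq_intCast_iff]
  push_cast at hsum ha hb hP ⊢
  refine (isUnit_six_zmod_sq hp hp3).mul_left_cancel ?_
  linear_combination hsum
    + (-3 * (m : ZMod ((m + 1) ^ 2)) ^ 2 * (D (m - 1) + 3 * D m) + 2 * m * (9 * m + 5) * D m) * hb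
    + 30 * (m : ZMod ((m + 1) ^ 2)) * (D m + 1) * ha + 30 * hP
end
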